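/- Let A* be a primitive nonnegative square matrix with spectral radius λ and positive right Perron vector v (so A* v = λ v). Let 𝒜 be a finite set of nonnegative matrices of the same size containing A*, closed under replacing a single row of A* with the corresponding row of any member, such that every such single-row replacement yields a primitive matrix, and such that λ = min over D ∈ 𝒜 of the spectral radius of D. Then A v ≥ λ v entrywise for every A ∈ 𝒜. -/

import Mathlib

open Matrix

noncomputable def specRad {n : Type*} [Fintype n] [DecidableEq n]
    (A : Matrix n n ℝ) : ℝ :=
  sSup {r : ℝ | ∃ μ ∈ spectrum ℂ (A.map Complex.ofReal), r = ‖μ‖}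

def IsPrimitive {n : Type*} [Fintype n] [DecidableEq n]
    (A : Matrix n n ℝ) : Prop :=
  ∃ k : ℕ, 1 ≤ k ∧ ∀ i j, 0 < (A ^ k) i j

/-!
If some `A ∈ 𝒜` had `(A v)_a < λ v_a`, swapping row `a` of `A*` for row `a` of `A` would give a
primitive `B ∈ 𝒜` with `B v ≤ λ v` and slack in coordinate `a`. Primitivity spreads this slack:
`B ^ (k + 1) v < λ ^ (k + 1) v` in every coordinate, and the Collatz–Wielandt bound for
eigenvalues then forces `ρ(B) < λ`, against the minimality of `λ`.
-/

namespace Matrix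

variable {n : Type*} [Fintype n]

lemma mulVec_mono_of_nonneg {l α : Type*} [Semiring α] [PartialOrder α] [IsOrderedRing α]
    {B : Matrix l n α} (hB : ∀ i j, 0 ≤ B i j) {u w : n → α} (huw : u ≤ w) :
    B *ᵥ u ≤ B *ᵥ w := fun i =>
  Finset.sum_le_sum fun j _ => mul_le_mul_of_nonneg_left (huw j) (hB i j)

lemma norm_map_ofReal_mulVec_apply_le {l : Type*} {C : Matrix l n ℝ} (hC : ∀ i j, 0 ≤ C i j)
    (w : n → ℂ) (i : l) : ‖(C.map Complex.ofReal *ᵥ w) i‖ ≤ (C *ᵥ fun j => ‖w j‖) i := by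
  refine (norm_sum_le _ _).trans_eq (Finset.sum_congr rfl fun j _ => ?_)
  simp only [map_apply, norm_mul, Complex.norm_real, Real.norm_of_nonneg (hC i j)]

lemma norm_lt_of_mulVec_lt {C : Matrix n n ℝ} (hC : ∀ i j, 0 ≤ C i j) {v : n → ℝ}
    (hv : ∀ i, 0 < v i) {ρ : ℝ} (hCv : ∀ i, (C *ᵥ v) i < ρ * v i) {μ : ℂ} {w : n → ℂ}
    (hw0 : w ≠ 0) (hw : C.map Complex.ofReal *ᵥ w = μ • w) : ‖μ‖ < ρ := by
  obtain ⟨j, hj⟩ := Function.ne_iff.1 hw0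
  obtain ⟨i₀, -, hmax⟩ :=
    Finset.exists_max_image Finset.univ (fun i => ‖w i‖ / v i) ⟨j, Finset.mem_univ j⟩
  set c := ‖w i₀‖ / v i₀
  have hc : 0 < c := (div_pos (norm_pos_iff.2 hj) (hv j)).trans_le (hmax j (Finset.mem_univ j))
  have hwc : (fun i => ‖w i‖) ≤ c • v := fun i =>
    (div_le_iff₀ (hv i)).1 (hmax i (Finset.mem_univ i))
  have hwi₀ : ‖w i₀‖ = c * v i₀ := (div_mul_cancel₀ _ (hv i₀).ne').symm
  have key : ‖μ‖ * ‖w i₀‖ < ρ * ‖w i₀‖ :=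
    calc ‖μ‖ * ‖w i₀‖ = ‖(C.map Complex.ofReal *ᵥ w) i₀‖ := by rw [hw]; simp
      _ ≤ (C *ᵥ fun j => ‖w j‖) i₀ := norm_map_ofReal_mulVec_apply_le hC w i₀
      _ ≤ (C *ᵥ (c • v)) i₀ := mulVec_mono_of_nonneg hC hwc i₀
      _ = c * (C *ᵥ v) i₀ := by rw [mulVec_smul]; rfl
      _ < c * (ρ * v i₀) := mul_lt_mul_of_pos_left (hCv i₀) hc
      _ = ρ * ‖w i₀‖ := by rw [hwi₀]; ring
  exact lt_of_mul_lt_mul_right key (norm_nonneg _)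

variable [DecidableEq n]

lemma exists_mulVec_eq_smul_of_mem_spectrum {K : Type*} [Field K]
    {M : Matrix n n K} {μ : K} (hμ : μ ∈ spectrum K M) :
    ∃ w, w ≠ 0 ∧ M *ᵥ w = μ • w := by
  rw [← spectrum_toLin', ← Module.End.hasEigenvalue_iff_mem_spectrum] at hμ
  obtain ⟨w, hw⟩ := hμ.exists_hasEigenvector
  exact ⟨w, hw.2, by simpa using hw.apply_eq_smul⟩

section OrderedRing

variable {α : Type*} [CommRing α] [LinearOrder α] [IsStrictOrderedRing α]
  {B : Matrix n n α} {v : n → α} {lam : α}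

lemma pow_mulVec_le_of_mulVec_le (hB : ∀ i j, 0 ≤ B i j) (hlam : 0 ≤ lam)
    (hBv : B *ᵥ v ≤ lam • v) (k : ℕ) : B ^ k *ᵥ v ≤ lam ^ k • v := by
  induction k with
  | zero => simp
  | succ k ih =>
    calc B ^ (k + 1) *ᵥ v = B ^ k *ᵥ (B *ᵥ v) := by rw [pow_succ, mulVec_mulVec]
      _ ≤ B ^ k *ᵥ (lam • v) := mulVec_mono_of_nonneg (pow_apply_nonneg hB k) hBv
      _ = lam • (B ^ k *ᵥ v) := mulVec_smul _ _ _
      _ ≤ lam • (lam ^ k • v) := smul_le_smul_of_nonneg_left ih hlam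
      _ = lam ^ (k + 1) • v := by rw [smul_smul, pow_succ']

lemma pow_succ_mulVec_lt_of_pow_pos (hB : ∀ i j, 0 ≤ B i j) {k : ℕ}
    (hBk : ∀ i j, 0 < (B ^ k) i j) (hlam : 0 ≤ lam) (hBv : B *ᵥ v ≤ lam • v) {a : n}
    (ha : (B *ᵥ v) a < lam * v a) (i : n) :
    (B ^ (k + 1) *ᵥ v) i < lam ^ (k + 1) * v i := by
  have hstrict : (B ^ k *ᵥ (B *ᵥ v)) i < (B ^ k *ᵥ (lam • v)) i :=
    Finset.sum_lt_sum (fun j _ => mul_le_mul_of_nonneg_left (hBv j) (pow_apply_nonneg hB k i j))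
      ⟨a, Finset.mem_univ a, mul_lt_mul_of_pos_left ha (hBk i a)⟩
  calc (B ^ (k + 1) *ᵥ v) i = (B ^ k *ᵥ (B *ᵥ v)) i := by rw [pow_succ, mulVec_mulVec]
    _ < (B ^ k *ᵥ (lam • v)) i := hstrict
    _ = lam * (B ^ k *ᵥ v) i := by rw [mulVec_smul]; rfl
    _ ≤ lam * (lam ^ k * v i) :=
      mul_le_mul_of_nonneg_left (pow_mulVec_le_of_mulVec_le hB hlam hBv k i) hlam
    _ = lam ^ (k + 1) * v i := by ring

end OrderedRing

end Matrix

open Matrix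

lemma specRad_lt_of_forall_norm_lt {n : Type*} [Fintype n] [DecidableEq n]
    {A : Matrix n n ℝ} {ρ : ℝ} (hρ : 0 < ρ)
    (h : ∀ μ ∈ spectrum ℂ (A.map Complex.ofReal), ‖μ‖ < ρ) : specRad A < ρ := by
  have hS : {r : ℝ | ∃ μ ∈ spectrum ℂ (A.map Complex.ofReal), r = ‖μ‖} =
      (‖·‖) '' spectrum ℂ (A.map Complex.ofReal) := by
    ext r; simp [eq_comm]
  unfold specRad
  rw [hS]
  rcases (spectrum ℂ (A.map Complex.ofReal)).eq_empty_or_nonempty with hempty | hne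
  · -- `n` is empty and `sSup ∅ = 0`
    simpa [hempty] using hρ
  · refine ((finite_spectrum _).image _ |>.csSup_lt_iff (hne.image _)).2 ?_
    rintro _ ⟨μ, hμ, rfl⟩
    exact h μ hμ

theorem specRad_lt_of_mulVec_le_of_lt {n : Type*} [Fintype n] [DecidableEq n]
    {B : Matrix n n ℝ} (hB : ∀ i j, 0 ≤ B i j) (hprim : _root_.IsPrimitive B) {v : n → ℝ}
    (hv : ∀ i, 0 < v i) {lam : ℝ} (hBv : B *ᵥ v ≤ lam • v) {a : n}
    (ha : (B *ᵥ v) a < lam * v a) : specRad B < lam := by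
  have hlam : 0 < lam := by
    have : 0 ≤ (B *ᵥ v) a := Finset.sum_nonneg fun j _ => mul_nonneg (hB a j) (hv j).le
    exact pos_of_mul_pos_left (this.trans_lt ha) (hv a).le
  obtain ⟨k, -, hk⟩ := hprim
  refine specRad_lt_of_forall_norm_lt hlam fun μ hμ => ?_
  have hpow : μ ^ (k + 1) ∈ spectrum ℂ ((B ^ (k + 1)).map Complex.ofReal) := by
    rw [show (B ^ (k + 1)).map Complex.ofReal = (B.map Complex.ofReal) ^ (k + 1) from
      map_pow Complex.ofRealHom.mapMatrix B (k + 1)]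
    exact spectrum.pow_image_subset _ _ ⟨μ, hμ, rfl⟩
  obtain ⟨w, hw0, hw⟩ := exists_mulVec_eq_smul_of_mem_spectrum hpow
  have hlt := norm_lt_of_mulVec_lt (pow_apply_nonneg hB _) hv
    (pow_succ_mulVec_lt_of_pow_pos hB hk hlam.le hBv ha) hw0 hw
  rw [norm_pow] at hlt
  exact lt_of_pow_lt_pow_left₀ (k + 1) hlam.le hlt

theorem stmt4_general {m : ℕ} (Astar : Matrix (Fin m) (Fin m) ℝ)
    (𝒜 : Finset (Matrix (Fin m) (Fin m) ℝ))
    (hnn : ∀ A ∈ 𝒜, ∀ i j, 0 ≤ A i j)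
    (lam : ℝ)
    (v : Fin m → ℝ) (hv : ∀ i, 0 < v i)
    (heig : Astar.mulVec v = lam • v)
    (hclosed : ∀ A ∈ 𝒜, ∀ a : Fin m, Astar.updateRow a (A a) ∈ 𝒜)
    (hrepprim : ∀ A ∈ 𝒜, ∀ a : Fin m, _root_.IsPrimitive (Astar.updateRow a (A a)))
    (hmin : IsLeast {r : ℝ | ∃ A ∈ 𝒜, r = specRad A} lam) :
    ∀ A ∈ 𝒜, ∀ i, lam * v i ≤ A.mulVec v i := by
  intro A hA a
  by_contra! ha
  set B := Astar.updateRow a (A a)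
  have hBv : B *ᵥ v = Function.update (lam • v) a ((A *ᵥ v) a) := by
    rw [updateRow_mulVec, heig]; rfl
  have hBle : B *ᵥ v ≤ lam • v := by
    rw [hBv, update_le_iff]
    exact ⟨ha.le, fun _ _ => le_rfl⟩
  have hBa : (B *ᵥ v) a < lam * v a := by simpa [hBv] using ha
  have hlt : specRad B < lam :=
    specRad_lt_of_mulVec_le_of_lt (hnn B (hclosed A hA a)) (hrepprim A hA a) hv hBle hBa
  exact hlt.not_ge (hmin.2 ⟨B, hclosed A hA a, rfl⟩)

/-- let `A*` be primitive nonnegative with spectral radius `lam`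
and positive right Perron vector `v`.  Let `𝒜` be a finite set of nonnegative
matrices containing `A*`, such that replacing a single row of `A*` with the
corresponding row of any member of `𝒜` yields a primitive matrix again in `𝒜`,
and such that `lam` is the minimum of the spectral radii over `𝒜`.  Then
`A v ≥ lam • v` entrywise for every `A ∈ 𝒜`. -/
theorem stmt4 {m : ℕ} (Astar : Matrix (Fin m) (Fin m) ℝ)
    (𝒜 : Finset (Matrix (Fin m) (Fin m) ℝ))
    (hmem : Astar ∈ 𝒜)
    (hnn : ∀ A ∈ 𝒜, ∀ i j, 0 ≤ A i j)
    (hprim : _root_.IsPrimitive Astar)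
    (lam : ℝ) (hlam : lam = specRad Astar)
    (v : Fin m → ℝ) (hv : ∀ i, 0 < v i)
    (heig : Astar.mulVec v = lam • v)
    (hclosed : ∀ A ∈ 𝒜, ∀ a : Fin m, Astar.updateRow a (A a) ∈ 𝒜)
    (hrepprim : ∀ A ∈ 𝒜, ∀ a : Fin m, _root_.IsPrimitive (Astar.updateRow a (A a)))
    (hmin : IsLeast {r : ℝ | ∃ A ∈ 𝒜, r = specRad A} lam) :
    ∀ A ∈ 𝒜, ∀ i, lam * v i ≤ A.mulVec v i :=
  stmt4_general Astar 𝒜 hnn lam v hv heig hclosed hrepprim hmin
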